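/- arXiv:1910.12269 — 4 statements merged into one kernel-verified Lean document; each statement's English description precedes it below -/
import Mathlib

section
/- There exists a constant C > 0 such that for all ℓ ∈ ℤ² with |ℓ| ≥ 2, the lattice sum ∑_{k ∈ ℤ²} (1+|k|)^{-2}·(1+|ℓ-k|)^{-2} is bounded by C·|ℓ|^{-2}·log|ℓ|. -/
/-- Euclidean norm of a point in ℤ². -/
noncomputable def nrm (ℓ : ℤ × ℤ) : ℝ := Real.sqrt ((ℓ.1 : ℝ) ^ 2 + (ℓ.2 : ℝ) ^ 2)

open Finset

lemma nrm_nonneg (p : ℤ × ℤ) : 0 ≤ nrm p := Real.sqrt_nonneg _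

/-- complex representation -/
noncomputable def cz (p : ℤ × ℤ) : ℂ := ⟨(p.1 : ℝ), (p.2 : ℝ)⟩

lemma nrm_eq (p : ℤ × ℤ) : nrm p = ‖cz p‖ := by
  simp only [cz, Complex.norm_def, Complex.normSq_mk, nrm]
  congr 1; ring

lemma nrm_triangle (ℓ k : ℤ × ℤ) : nrm ℓ ≤ nrm k + nrm (ℓ - k) := by
  have h : cz ℓ = cz k + cz (ℓ - k) := by
    apply Complex.ext <;> simp [cz, Prod.fst_sub, Prod.snd_sub] <;> push_cast <;> ring
  rw [nrm_eq, nrm_eq, nrm_eq, h]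
  exact norm_add_le _ _

/-- sup-norm as a natural number -/
def sn (p : ℤ × ℤ) : ℕ := max p.1.natAbs p.2.natAbs

lemma abs_cast_fst (p : ℤ × ℤ) : ((p.1.natAbs : ℝ)) = |(p.1 : ℝ)| := by
  rw [Nat.cast_natAbs]; push_cast; ring

lemma sn_le_nrm (p : ℤ × ℤ) : (sn p : ℝ) ≤ nrm p := by
  have h1 : |(p.1 : ℝ)| ≤ nrm p := by
    rw [nrm, ← Real.sqrt_sq_eq_abs]
    exact Real.sqrt_le_sqrt (by nlinarith [sq_nonneg ((p.2 : ℝ))])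
  have h2 : |(p.2 : ℝ)| ≤ nrm p := by
    rw [nrm, ← Real.sqrt_sq_eq_abs]
    exact Real.sqrt_le_sqrt (by nlinarith [sq_nonneg ((p.1 : ℝ))])
  have : ((sn p : ℝ)) = max (p.1.natAbs : ℝ) (p.2.natAbs : ℝ) := by
    rw [sn]; push_cast; rfl
  rw [this, abs_cast_fst]
  have h2' : ((p.2.natAbs : ℝ)) = |(p.2 : ℝ)| := by rw [Nat.cast_natAbs]; push_cast; ring
  rw [h2']
  exact max_le h1 h2

lemma nrm_le_two_sn (p : ℤ × ℤ) : nrm p ≤ 2 * (sn p : ℝ) := by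
  have h : nrm p ≤ |(p.1 : ℝ)| + |(p.2 : ℝ)| := by
    rw [nrm]
    have : ((p.1:ℝ))^2 + ((p.2:ℝ))^2 ≤ (|(p.1 : ℝ)| + |(p.2 : ℝ)|)^2 := by
      have := abs_nonneg ((p.1:ℝ)); have := abs_nonneg ((p.2:ℝ))
      nlinarith [sq_abs ((p.1:ℝ)), sq_abs ((p.2:ℝ)), mul_nonneg (abs_nonneg ((p.1:ℝ))) (abs_nonneg ((p.2:ℝ)))]
    calc Real.sqrt (((p.1:ℝ))^2 + ((p.2:ℝ))^2) ≤ Real.sqrt ((|(p.1 : ℝ)| + |(p.2 : ℝ)|)^2) :=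
          Real.sqrt_le_sqrt this
      _ = |(p.1 : ℝ)| + |(p.2 : ℝ)| := Real.sqrt_sq (by positivity)
  have hmax : ((sn p : ℝ)) = max |(p.1:ℝ)| |(p.2:ℝ)| := by
    rw [sn]; push_cast [Nat.cast_natAbs]; push_cast; rfl
  rw [hmax]
  have := le_max_left |(p.1:ℝ)| |(p.2:ℝ)|
  have := le_max_right |(p.1:ℝ)| |(p.2:ℝ)|
  linarith

/-- closed ibox of radius N -/
noncomputable def ibox (N : ℕ) : Finset (ℤ × ℤ) :=
  Finset.Icc (-(N : ℤ)) N ×ˢ Finset.Icc (-(N : ℤ)) N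

lemma mem_ibox {N : ℕ} {p : ℤ × ℤ} : p ∈ ibox N ↔ sn p ≤ N := by
  simp only [ibox, Finset.mem_product, Finset.mem_Icc, sn, Nat.max_le]
  constructor
  · rintro ⟨⟨h1, h2⟩, h3, h4⟩
    constructor <;> omega
  · rintro ⟨h1, h2⟩
    refine ⟨⟨?_, ?_⟩, ?_, ?_⟩ <;> omega

lemma card_ibox (N : ℕ) : (ibox N).card = (2 * N + 1) ^ 2 := by
  rw [ibox, Finset.card_product, Int.card_Icc]
  have : ((N : ℤ) + 1 - -(N : ℤ)).toNat = 2 * N + 1 := by omega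
  rw [this]; ring

lemma ibox_mono {m n : ℕ} (h : m ≤ n) : ibox m ⊆ ibox n := by
  intro p hp; rw [mem_ibox] at *; omega

lemma card_shell (N n : ℕ) :
    ((ibox N).filter (fun k => sn k = n)).card ≤ 8 * (n + 1) := by
  rcases Nat.eq_zero_or_pos n with hn | hn
  · subst hn
    have hsub : (ibox N).filter (fun k => sn k = 0) ⊆ ibox 0 := by
      intro k hk
      rw [mem_ibox]
      exact Nat.le_of_eq (Finset.mem_filter.1 hk).2
    calc ((ibox N).filter (fun k => sn k = 0)).card ≤ (ibox 0).card := Finset.card_le_card hsub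
      _ = 1 := by rw [card_ibox]; norm_num
      _ ≤ 8 * (0 + 1) := by norm_num
  · obtain ⟨m, rfl⟩ : ∃ m, n = m + 1 := ⟨n - 1, by omega⟩
    have hsub : (ibox N).filter (fun k => sn k = m + 1) ⊆ ibox (m + 1) \ ibox m := by
      intro k hk
      have h2 := (Finset.mem_filter.1 hk).2
      rw [Finset.mem_sdiff, mem_ibox, mem_ibox]
      omega
    calc ((ibox N).filter (fun k => sn k = m + 1)).card
        ≤ (ibox (m + 1) \ ibox m).card := Finset.card_le_card hsub
      _ = (ibox (m + 1)).card - (ibox m).card :=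
          Finset.card_sdiff_of_subset (ibox_mono (Nat.le_succ m))
      _ = (2 * (m + 1) + 1) ^ 2 - (2 * m + 1) ^ 2 := by rw [card_ibox, card_ibox]
      _ ≤ 8 * (m + 1 + 1) := by ring_nf; omega

/-- Lemma A: fiberwise counting bound -/
lemma sumA (φ : ℕ → ℝ) (hφ : ∀ n, 0 ≤ φ n) (F : Finset (ℤ × ℤ)) (N : ℕ)
    (hF : ∀ k ∈ F, sn k ≤ N) :
    ∑ k ∈ F, φ (sn k) ≤ ∑ n ∈ Finset.range (N + 1), 8 * ((n : ℝ) + 1) * φ n := by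
  have h1 : ∑ k ∈ F, φ (sn k) ≤ ∑ k ∈ ibox N, φ (sn k) :=
    Finset.sum_le_sum_of_subset_of_nonneg
      (fun k hk => mem_ibox.2 (hF k hk)) (fun k _ _ => hφ _)
  have h2 : ∑ n ∈ Finset.range (N + 1), ∑ k ∈ (ibox N).filter (fun k => sn k = n), φ (sn k)
      = ∑ k ∈ ibox N, φ (sn k) :=
    Finset.sum_fiberwise_of_maps_to
      (fun k hk => Finset.mem_range.2 (Nat.lt_succ_of_le (mem_ibox.1 hk))) _
  rw [← h2] at h1
  refine h1.trans (Finset.sum_le_sum fun n _ => ?_)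
  have h3 : ∑ k ∈ (ibox N).filter (fun k => sn k = n), φ (sn k)
      = (((ibox N).filter (fun k => sn k = n)).card : ℝ) * φ n := by
    rw [Finset.sum_congr rfl (fun k hk => by rw [(Finset.mem_filter.1 hk).2]),
      Finset.sum_const, nsmul_eq_mul]
  rw [h3]
  have h4 : (((ibox N).filter (fun k => sn k = n)).card : ℝ) ≤ 8 * ((n : ℝ) + 1) := by
    have := card_shell N n
    exact_mod_cast (by exact_mod_cast this : (((ibox N).filter (fun k => sn k = n)).card : ℝ) ≤ ((8 * (n + 1) : ℕ) : ℝ))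
  exact mul_le_mul_of_nonneg_right h4 (hφ n)

/-- B1: truncated sum of (1+|k|)⁻² is logarithmic -/
lemma sumB1 (F : Finset (ℤ × ℤ)) (M : ℝ) (hM : 1 ≤ M) :
    ∑ k ∈ F, (if nrm k ≤ M then ((1 + nrm k) ^ 2)⁻¹ else 0)
      ≤ 8 * (1 + Real.log (M + 1)) := by
  classical
  set N := ⌊M⌋₊ with hN
  have hsum : ∑ k ∈ F, (if nrm k ≤ M then ((1 + nrm k) ^ 2)⁻¹ else 0)
      = ∑ k ∈ F.filter (fun k => nrm k ≤ M), ((1 + nrm k) ^ 2)⁻¹ :=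
    (Finset.sum_filter _ _).symm
  rw [hsum]
  set φ : ℕ → ℝ := fun n => (((n : ℝ) + 1) ^ 2)⁻¹ with hφdef
  have hφ : ∀ n, 0 ≤ φ n := fun n => by positivity
  have step2 : ∑ k ∈ F.filter (fun k => nrm k ≤ M), ((1 + nrm k) ^ 2)⁻¹
      ≤ ∑ k ∈ F.filter (fun k => nrm k ≤ M), φ (sn k) := by
    refine Finset.sum_le_sum fun k _ => ?_
    have h1 : (sn k : ℝ) + 1 ≤ 1 + nrm k := by
      have := sn_le_nrm k; linarith
    have h2 : (0:ℝ) < (sn k : ℝ) + 1 := by positivity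
    exact inv_anti₀ (by positivity) (by nlinarith)
  have step3 : ∑ k ∈ F.filter (fun k => nrm k ≤ M), φ (sn k)
      ≤ ∑ n ∈ Finset.range (N + 1), 8 * ((n : ℝ) + 1) * φ n := by
    refine sumA φ hφ _ N fun k hk => ?_
    have hkM : nrm k ≤ M := (Finset.mem_filter.1 hk).2
    have := sn_le_nrm k
    exact Nat.le_floor (by linarith)
  have step4 : ∑ n ∈ Finset.range (N + 1), 8 * ((n : ℝ) + 1) * φ n
      = 8 * ∑ n ∈ Finset.range (N + 1), ((n : ℝ) + 1)⁻¹ := by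
    rw [Finset.mul_sum]
    refine Finset.sum_congr rfl fun n _ => ?_
    have h : ((n : ℝ) + 1) ≠ 0 := by positivity
    simp only [hφdef]
    field_simp
  have step5 : ∑ n ∈ Finset.range (N + 1), ((n : ℝ) + 1)⁻¹
      = ((harmonic (N + 1) : ℚ) : ℝ) := by
    rw [harmonic]
    push_cast
    rfl
  have step6 : ((harmonic (N + 1) : ℚ) : ℝ) ≤ 1 + Real.log ((N : ℝ) + 1) := by
    have := harmonic_le_one_add_log (N + 1)
    push_cast at this ⊢
    convert this using 3
  have step7 : Real.log ((N : ℝ) + 1) ≤ Real.log (M + 1) := by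
    apply Real.log_le_log (by positivity)
    have : (N : ℝ) ≤ M := Nat.floor_le (by linarith)
    linarith
  calc ∑ k ∈ F.filter (fun k => nrm k ≤ M), ((1 + nrm k) ^ 2)⁻¹
      ≤ 8 * ∑ n ∈ Finset.range (N + 1), ((n : ℝ) + 1)⁻¹ := by
        rw [← step4]; exact step2.trans step3
    _ ≤ 8 * (1 + Real.log (M + 1)) := by
        rw [step5]
        have := step6.trans (by linarith : 1 + Real.log ((N:ℝ)+1) ≤ 1 + Real.log (M+1))
        linarith

/-- telescoping tail bound -/
lemma tele (m : ℕ) (hm : 1 ≤ m) (N : ℕ) :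
    ∑ n ∈ Finset.range N, (if m ≤ n then (((n : ℝ) + 1) ^ 2)⁻¹ else 0)
      ≤ (m : ℝ)⁻¹ - ((max m N : ℕ) : ℝ)⁻¹ := by
  induction N with
  | zero => simp [Nat.max_eq_left (Nat.zero_le m)]
  | succ N ih =>
    rw [Finset.sum_range_succ]
    by_cases h : m ≤ N
    · rw [if_pos h]
      have hmax1 : max m N = N := Nat.max_eq_right h
      have hmax2 : max m (N + 1) = N + 1 := Nat.max_eq_right (by omega)
      rw [hmax1] at ih
      rw [hmax2]
      have hN : (0:ℝ) < (N : ℝ) := by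
        have : 1 ≤ N := le_trans hm h
        exact_mod_cast Nat.lt_of_lt_of_le Nat.zero_lt_one this
      have key : (((N : ℝ) + 1) ^ 2)⁻¹ ≤ (N : ℝ)⁻¹ - ((N : ℝ) + 1)⁻¹ := by
        have hN0 : (N:ℝ) ≠ 0 := ne_of_gt hN
        have h1 : (N:ℝ)⁻¹ - ((N:ℝ)+1)⁻¹ = ((N:ℝ) * ((N:ℝ)+1))⁻¹ := by
          field_simp
          ring
        rw [h1]
        apply inv_anti₀ (by positivity)
        nlinarith
      push_cast
      push_cast at ih
      linarith
    · rw [if_neg h]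
      have hmax1 : max m N = m := Nat.max_eq_left (by omega)
      have hmax2 : max m (N + 1) = m := Nat.max_eq_left (by omega)
      rw [hmax1] at ih
      rw [hmax2]
      linarith

/-- B2: tail sum of (1+|k|)⁻³ -/
lemma sumB2 (F : Finset (ℤ × ℤ)) (M : ℝ) (hM : 1 ≤ M) :
    ∑ k ∈ F, (if M ≤ nrm k then ((1 + nrm k) ^ 3)⁻¹ else 0) ≤ 16 / M := by
  classical
  set m := ⌈M / 2⌉₊ with hmdef
  have hm1 : 1 ≤ m := by
    rw [hmdef]
    exact Nat.one_le_iff_ne_zero.2 (by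
      simp only [ne_eq, Nat.ceil_eq_zero, not_le]
      linarith)
  set ψ : ℕ → ℝ := fun n => if m ≤ n then (((n : ℝ) + 1) ^ 3)⁻¹ else 0 with hψdef
  have hψ : ∀ n, 0 ≤ ψ n := fun n => by
    rw [hψdef]; dsimp only; split <;> positivity
  have step1 : ∑ k ∈ F, (if M ≤ nrm k then ((1 + nrm k) ^ 3)⁻¹ else 0)
      ≤ ∑ k ∈ F, ψ (sn k) := by
    refine Finset.sum_le_sum fun k _ => ?_
    by_cases h : M ≤ nrm k
    · rw [if_pos h]
      have hsn : m ≤ sn k := by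
        rw [hmdef]
        apply Nat.ceil_le.2
        have h1 := nrm_le_two_sn k
        linarith
      rw [hψdef]
      dsimp only
      rw [if_pos hsn]
      have h1 : (sn k : ℝ) + 1 ≤ 1 + nrm k := by have := sn_le_nrm k; linarith
      exact inv_anti₀ (by positivity) (pow_le_pow_left₀ (by positivity) h1 3)
    · rw [if_neg h]; exact hψ _
  set N := F.sup sn with hNdef
  have step2 : ∑ k ∈ F, ψ (sn k) ≤ ∑ n ∈ Finset.range (N + 1), 8 * ((n : ℝ) + 1) * ψ n :=
    sumA ψ hψ F N fun k hk => Finset.le_sup hk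
  have step3 : ∑ n ∈ Finset.range (N + 1), 8 * ((n : ℝ) + 1) * ψ n
      = 8 * ∑ n ∈ Finset.range (N + 1), (if m ≤ n then (((n : ℝ) + 1) ^ 2)⁻¹ else 0) := by
    rw [Finset.mul_sum]
    refine Finset.sum_congr rfl fun n _ => ?_
    rw [hψdef]
    dsimp only
    split
    · have h : ((n : ℝ) + 1) ≠ 0 := by positivity
      field_simp
    · ring
  have step4 : ∑ n ∈ Finset.range (N + 1), (if m ≤ n then (((n : ℝ) + 1) ^ 2)⁻¹ else 0)
      ≤ (m : ℝ)⁻¹ := by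
    refine (tele m hm1 (N + 1)).trans ?_
    have : (0:ℝ) ≤ ((max m (N + 1) : ℕ) : ℝ)⁻¹ := by positivity
    linarith
  have hm2 : M / 2 ≤ (m : ℝ) := Nat.le_ceil _
  have hmpos : (0:ℝ) < (m : ℝ) := by exact_mod_cast hm1
  have step5 : (m : ℝ)⁻¹ ≤ 2 / M := by
    rw [inv_eq_one_div, div_le_div_iff₀ hmpos (by linarith : (0:ℝ) < M)]
    linarith
  calc ∑ k ∈ F, (if M ≤ nrm k then ((1 + nrm k) ^ 3)⁻¹ else 0)
      ≤ 8 * (m : ℝ)⁻¹ := by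
        refine step1.trans (step2.trans ?_)
        rw [step3]
        linarith
    _ ≤ 16 / M := by
        have : 8 * (m:ℝ)⁻¹ ≤ 8 * (2 / M) := by linarith
        calc 8 * (m:ℝ)⁻¹ ≤ 8 * (2 / M) := this
          _ = 16 / M := by ring

/-- key pointwise real inequality -/
lemma keyreal (A B L : ℝ) (hA : 0 ≤ A) (hB : 0 ≤ B) (hL : 2 ≤ L) (htri : L ≤ A + B) :
    ((1 + A) ^ 2)⁻¹ * ((1 + B) ^ 2)⁻¹ ≤
      4 / L ^ 2 * (if A ≤ L / 2 then ((1 + A) ^ 2)⁻¹ else 0)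
      + 4 / L ^ 2 * (if B ≤ L / 2 then ((1 + B) ^ 2)⁻¹ else 0)
      + 1 / (L / 2) * (if L / 2 ≤ A then ((1 + A) ^ 3)⁻¹ else 0)
      + 1 / (L / 2) * (if L / 2 ≤ B then ((1 + B) ^ 3)⁻¹ else 0) := by
  have hL0 : (0:ℝ) < L := by linarith
  have ha1 : (0:ℝ) < 1 + A := by linarith
  have hb1 : (0:ℝ) < 1 + B := by linarith
  have hc1 : (0:ℝ) ≤ 4 / L ^ 2 := by positivity
  have hc2 : (0:ℝ) ≤ 1 / (L / 2) := by positivity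
  have hr1 : (0:ℝ) ≤ 4 / L ^ 2 * (if A ≤ L / 2 then ((1 + A) ^ 2)⁻¹ else 0) := by
    apply mul_nonneg hc1; split <;> positivity
  have hr2 : (0:ℝ) ≤ 4 / L ^ 2 * (if B ≤ L / 2 then ((1 + B) ^ 2)⁻¹ else 0) := by
    apply mul_nonneg hc1; split <;> positivity
  have hr3 : (0:ℝ) ≤ 1 / (L / 2) * (if L / 2 ≤ A then ((1 + A) ^ 3)⁻¹ else 0) := by
    apply mul_nonneg hc2; split <;> positivity
  have hr4 : (0:ℝ) ≤ 1 / (L / 2) * (if L / 2 ≤ B then ((1 + B) ^ 3)⁻¹ else 0) := by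
    apply mul_nonneg hc2; split <;> positivity
  by_cases h1 : A ≤ L / 2
  · -- then B ≥ L/2, use the first term
    have hb : ((1 + B) ^ 2)⁻¹ ≤ 4 / L ^ 2 := by
      have h2 : L / 2 ≤ 1 + B := by linarith
      have h3 : L ^ 2 / 4 ≤ (1 + B) ^ 2 := by nlinarith
      calc ((1 + B) ^ 2)⁻¹ ≤ (L ^ 2 / 4)⁻¹ := inv_anti₀ (by positivity) h3
        _ = 4 / L ^ 2 := by field_simp
    have hmain : ((1 + A) ^ 2)⁻¹ * ((1 + B) ^ 2)⁻¹
        ≤ 4 / L ^ 2 * (if A ≤ L / 2 then ((1 + A) ^ 2)⁻¹ else 0) := by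
      rw [if_pos h1]
      calc ((1 + A) ^ 2)⁻¹ * ((1 + B) ^ 2)⁻¹ ≤ ((1 + A) ^ 2)⁻¹ * (4 / L ^ 2) :=
            mul_le_mul_of_nonneg_left hb (by positivity)
        _ = 4 / L ^ 2 * ((1 + A) ^ 2)⁻¹ := by ring
    linarith
  · by_cases h2 : B ≤ L / 2
    · have ha : ((1 + A) ^ 2)⁻¹ ≤ 4 / L ^ 2 := by
        have h3 : L / 2 ≤ 1 + A := by linarith
        have h4 : L ^ 2 / 4 ≤ (1 + A) ^ 2 := by nlinarith
        calc ((1 + A) ^ 2)⁻¹ ≤ (L ^ 2 / 4)⁻¹ := inv_anti₀ (by positivity) h4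
          _ = 4 / L ^ 2 := by field_simp
      have hmain : ((1 + A) ^ 2)⁻¹ * ((1 + B) ^ 2)⁻¹
          ≤ 4 / L ^ 2 * (if B ≤ L / 2 then ((1 + B) ^ 2)⁻¹ else 0) := by
        rw [if_pos h2]
        exact mul_le_mul_of_nonneg_right ha (by positivity)
      linarith
    · push_neg at h1 h2
      by_cases h3 : A ≤ B
      · -- use the third term
        have hb : ((1 + B) ^ 2)⁻¹ ≤ ((1 + A) * (L / 2))⁻¹ := by
          apply inv_anti₀ (by positivity)
          nlinarith
        have hmain : ((1 + A) ^ 2)⁻¹ * ((1 + B) ^ 2)⁻¹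
            ≤ 1 / (L / 2) * (if L / 2 ≤ A then ((1 + A) ^ 3)⁻¹ else 0) := by
          rw [if_pos (le_of_lt h1)]
          calc ((1 + A) ^ 2)⁻¹ * ((1 + B) ^ 2)⁻¹
              ≤ ((1 + A) ^ 2)⁻¹ * ((1 + A) * (L / 2))⁻¹ :=
                mul_le_mul_of_nonneg_left hb (by positivity)
            _ = 1 / (L / 2) * ((1 + A) ^ 3)⁻¹ := by
                rw [mul_inv]
                have : ((1 + A) ^ 2)⁻¹ * ((1 + A)⁻¹ * (L / 2)⁻¹)
                    = (((1 + A) ^ 2)⁻¹ * (1 + A)⁻¹) * (L / 2)⁻¹ := by ring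
                rw [this, ← mul_inv, ← pow_succ]
                rw [one_div]
                ring
        linarith
      · push_neg at h3
        have ha : ((1 + A) ^ 2)⁻¹ ≤ ((1 + B) * (L / 2))⁻¹ := by
          apply inv_anti₀ (by positivity)
          nlinarith
        have hmain : ((1 + A) ^ 2)⁻¹ * ((1 + B) ^ 2)⁻¹
            ≤ 1 / (L / 2) * (if L / 2 ≤ B then ((1 + B) ^ 3)⁻¹ else 0) := by
          rw [if_pos (le_of_lt h2)]
          calc ((1 + A) ^ 2)⁻¹ * ((1 + B) ^ 2)⁻¹
              ≤ ((1 + B) * (L / 2))⁻¹ * ((1 + B) ^ 2)⁻¹ :=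
                mul_le_mul_of_nonneg_right ha (by positivity)
            _ = 1 / (L / 2) * ((1 + B) ^ 3)⁻¹ := by
                rw [mul_inv]
                have : (1 + B)⁻¹ * (L / 2)⁻¹ * ((1 + B) ^ 2)⁻¹
                    = (((1 + B) ^ 2)⁻¹ * (1 + B)⁻¹) * (L / 2)⁻¹ := by ring
                rw [this, ← mul_inv, ← pow_succ]
                rw [one_div]
                ring
        linarith

/-- The lattice convolution sum ∑_{k ∈ ℤ²} (1+|k|)⁻²(1+|ℓ-k|)⁻² is summable and bounded
by C·|ℓ|⁻²·log|ℓ| for all ℓ ∈ ℤ² with |ℓ| ≥ 2. -/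
theorem lattice_convolution_bound :
    ∃ C : ℝ, 0 < C ∧ ∀ ℓ : ℤ × ℤ, 2 ≤ nrm ℓ →
      Summable (fun k : ℤ × ℤ => ((1 + nrm k) ^ 2)⁻¹ * ((1 + nrm (ℓ - k)) ^ 2)⁻¹) ∧
      (∑' k : ℤ × ℤ, ((1 + nrm k) ^ 2)⁻¹ * ((1 + nrm (ℓ - k)) ^ 2)⁻¹)
        ≤ C * ((nrm ℓ) ^ 2)⁻¹ * Real.log (nrm ℓ) := by
  classical
  have hlog2 : 0 < Real.log 2 := Real.log_pos (by norm_num)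
  refine ⟨64 + 192 / Real.log 2, by positivity, fun ℓ hL => ?_⟩
  have hL0 : (0:ℝ) < nrm ℓ := by linarith
  have hM : (1:ℝ) ≤ nrm ℓ / 2 := by linarith
  have hM0 : (0:ℝ) < nrm ℓ / 2 := by linarith
  set M : ℝ := nrm ℓ / 2 with hMdef
  -- majorant pieces
  set g1 : ℤ × ℤ → ℝ := fun k => if nrm k ≤ M then ((1 + nrm k) ^ 2)⁻¹ else 0 with hg1
  set g3 : ℤ × ℤ → ℝ := fun k => if M ≤ nrm k then ((1 + nrm k) ^ 3)⁻¹ else 0 with hg3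
  have hg1nn : ∀ k, 0 ≤ g1 k := fun k => by
    have h0 := nrm_nonneg k
    rw [hg1]; dsimp only; split <;> positivity
  have hg3nn : ∀ k, 0 ≤ g3 k := fun k => by
    have h0 := nrm_nonneg k
    rw [hg3]; dsimp only; split <;> positivity
  -- partial sum bounds
  have hs1 : ∀ F : Finset (ℤ × ℤ), ∑ k ∈ F, g1 k ≤ 8 * (1 + Real.log (M + 1)) :=
    fun F => sumB1 F M hM
  have hs3 : ∀ F : Finset (ℤ × ℤ), ∑ k ∈ F, g3 k ≤ 16 / M :=
    fun F => sumB2 F M hM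
  have hs2 : ∀ F : Finset (ℤ × ℤ), ∑ k ∈ F, g1 (ℓ - k) ≤ 8 * (1 + Real.log (M + 1)) := by
    intro F
    have hinj : ∀ x ∈ F, ∀ y ∈ F, ℓ - x = ℓ - y → x = y :=
      fun x _ y _ h => sub_right_injective h
    rw [← Finset.sum_image hinj]
    exact hs1 _
  have hs4 : ∀ F : Finset (ℤ × ℤ), ∑ k ∈ F, g3 (ℓ - k) ≤ 16 / M := by
    intro F
    have hinj : ∀ x ∈ F, ∀ y ∈ F, ℓ - x = ℓ - y → x = y :=
      fun x _ y _ h => sub_right_injective h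
    rw [← Finset.sum_image hinj]
    exact hs3 _
  -- summability
  have sm1 : Summable g1 := summable_of_sum_le hg1nn hs1
  have sm2 : Summable (fun k => g1 (ℓ - k)) :=
    summable_of_sum_le (fun k => hg1nn _) hs2
  have sm3 : Summable g3 := summable_of_sum_le hg3nn hs3
  have sm4 : Summable (fun k => g3 (ℓ - k)) :=
    summable_of_sum_le (fun k => hg3nn _) hs4
  have sc1 : Summable (fun k => 4 / (nrm ℓ) ^ 2 * g1 k) := sm1.mul_left _
  have sc2 : Summable (fun k => 4 / (nrm ℓ) ^ 2 * g1 (ℓ - k)) := sm2.mul_left _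
  have sc3 : Summable (fun k => 1 / M * g3 k) := sm3.mul_left _
  have sc4 : Summable (fun k => 1 / M * g3 (ℓ - k)) := sm4.mul_left _
  have smg : Summable (fun k => 4 / (nrm ℓ) ^ 2 * g1 k + 4 / (nrm ℓ) ^ 2 * g1 (ℓ - k)
      + 1 / M * g3 k + 1 / M * g3 (ℓ - k)) :=
    ((sc1.add sc2).add sc3).add sc4
  -- pointwise bound
  have key : ∀ k : ℤ × ℤ, ((1 + nrm k) ^ 2)⁻¹ * ((1 + nrm (ℓ - k)) ^ 2)⁻¹
      ≤ 4 / (nrm ℓ) ^ 2 * g1 k + 4 / (nrm ℓ) ^ 2 * g1 (ℓ - k)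
        + 1 / M * g3 k + 1 / M * g3 (ℓ - k) := by
    intro k
    have htri : nrm ℓ ≤ nrm k + nrm (ℓ - k) := nrm_triangle ℓ k
    have := keyreal (nrm k) (nrm (ℓ - k)) (nrm ℓ) (nrm_nonneg k) (nrm_nonneg _) hL htri
    rw [hg1, hg3, hMdef]
    exact this
  have hfnn : ∀ k : ℤ × ℤ, 0 ≤ ((1 + nrm k) ^ 2)⁻¹ * ((1 + nrm (ℓ - k)) ^ 2)⁻¹ :=
    fun k => by positivity
  have sf : Summable (fun k : ℤ × ℤ => ((1 + nrm k) ^ 2)⁻¹ * ((1 + nrm (ℓ - k)) ^ 2)⁻¹) :=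
    Summable.of_nonneg_of_le hfnn key smg
  refine ⟨sf, ?_⟩
  -- tsum bounds
  have hT1 : ∑' k, g1 k ≤ 8 * (1 + Real.log (M + 1)) := Summable.tsum_le_of_sum_le sm1 hs1
  have hT2 : ∑' k, g1 (ℓ - k) ≤ 8 * (1 + Real.log (M + 1)) := Summable.tsum_le_of_sum_le sm2 hs2
  have hT3 : ∑' k, g3 k ≤ 16 / M := Summable.tsum_le_of_sum_le sm3 hs3
  have hT4 : ∑' k, g3 (ℓ - k) ≤ 16 / M := Summable.tsum_le_of_sum_le sm4 hs4
  have hstep : (∑' k : ℤ × ℤ, ((1 + nrm k) ^ 2)⁻¹ * ((1 + nrm (ℓ - k)) ^ 2)⁻¹)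
      ≤ ∑' k : ℤ × ℤ, (4 / (nrm ℓ) ^ 2 * g1 k + 4 / (nrm ℓ) ^ 2 * g1 (ℓ - k)
        + 1 / M * g3 k + 1 / M * g3 (ℓ - k)) := Summable.tsum_le_tsum key sf smg
  have hsplit : (∑' k : ℤ × ℤ, (4 / (nrm ℓ) ^ 2 * g1 k + 4 / (nrm ℓ) ^ 2 * g1 (ℓ - k)
        + 1 / M * g3 k + 1 / M * g3 (ℓ - k)))
      = 4 / (nrm ℓ) ^ 2 * (∑' k, g1 k) + 4 / (nrm ℓ) ^ 2 * (∑' k, g1 (ℓ - k))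
        + 1 / M * (∑' k, g3 k) + 1 / M * (∑' k, g3 (ℓ - k)) := by
    rw [Summable.tsum_add ((sc1.add sc2).add sc3) sc4, Summable.tsum_add (sc1.add sc2) sc3,
      Summable.tsum_add sc1 sc2, tsum_mul_left, tsum_mul_left, tsum_mul_left, tsum_mul_left]
  -- final numeric estimate
  have hnonneg1 : (0:ℝ) ≤ 4 / (nrm ℓ) ^ 2 := by positivity
  have hnonneg2 : (0:ℝ) ≤ 1 / M := by positivity
  have hg1t : (0:ℝ) ≤ ∑' k, g1 (ℓ - k) := tsum_nonneg (fun k => hg1nn _)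
  have hg1t' : (0:ℝ) ≤ ∑' k, g1 k := tsum_nonneg hg1nn
  have hg3t : (0:ℝ) ≤ ∑' k, g3 (ℓ - k) := tsum_nonneg (fun k => hg3nn _)
  have hg3t' : (0:ℝ) ≤ ∑' k, g3 k := tsum_nonneg hg3nn
  have hcomb : 4 / (nrm ℓ) ^ 2 * (∑' k, g1 k) + 4 / (nrm ℓ) ^ 2 * (∑' k, g1 (ℓ - k))
        + 1 / M * (∑' k, g3 k) + 1 / M * (∑' k, g3 (ℓ - k))
      ≤ 4 / (nrm ℓ) ^ 2 * (8 * (1 + Real.log (M + 1))) * 2 + 1 / M * (16 / M) * 2 := by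
    have b1 := mul_le_mul_of_nonneg_left hT1 hnonneg1
    have b2 := mul_le_mul_of_nonneg_left hT2 hnonneg1
    have b3 := mul_le_mul_of_nonneg_left hT3 hnonneg2
    have b4 := mul_le_mul_of_nonneg_left hT4 hnonneg2
    linarith
  -- arithmetic: convert to C * L⁻² * log L
  have hlogM : Real.log (M + 1) ≤ Real.log (nrm ℓ) := by
    apply Real.log_le_log (by positivity)
    rw [hMdef]; linarith
  have hlogL : Real.log 2 ≤ Real.log (nrm ℓ) := Real.log_le_log (by norm_num) hL
  have hlogLpos : 0 < Real.log (nrm ℓ) := lt_of_lt_of_le hlog2 hlogL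
  have hdivlog : (1:ℝ) ≤ Real.log (nrm ℓ) / Real.log 2 := (one_le_div hlog2).2 hlogL
  have harith : 4 / (nrm ℓ) ^ 2 * (8 * (1 + Real.log (M + 1))) * 2 + 1 / M * (16 / M) * 2
      ≤ (64 + 192 / Real.log 2) * ((nrm ℓ) ^ 2)⁻¹ * Real.log (nrm ℓ) := by
    have hM2 : 1 / M * (16 / M) * 2 = 128 / (nrm ℓ) ^ 2 := by
      rw [hMdef]; field_simp; ring
    have hL2 : 4 / (nrm ℓ) ^ 2 * (8 * (1 + Real.log (M + 1))) * 2
        = (64 * (1 + Real.log (M + 1))) / (nrm ℓ) ^ 2 := by ring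
    rw [hM2, hL2]
    have hkey2 : 64 * (1 + Real.log (M + 1)) + 128
        ≤ (64 + 192 / Real.log 2) * Real.log (nrm ℓ) := by
      have e1 : (64 + 192 / Real.log 2) * Real.log (nrm ℓ)
          = 64 * Real.log (nrm ℓ) + 192 * (Real.log (nrm ℓ) / Real.log 2) := by ring
      have e2 : (192:ℝ) ≤ 192 * (Real.log (nrm ℓ) / Real.log 2) := by linarith
      rw [e1]
      linarith
    have hLsq : (0:ℝ) < (nrm ℓ) ^ 2 := by positivity
    calc (64 * (1 + Real.log (M + 1))) / (nrm ℓ) ^ 2 + 128 / (nrm ℓ) ^ 2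
        = (64 * (1 + Real.log (M + 1)) + 128) * ((nrm ℓ) ^ 2)⁻¹ := by ring
      _ ≤ ((64 + 192 / Real.log 2) * Real.log (nrm ℓ)) * ((nrm ℓ) ^ 2)⁻¹ :=
          mul_le_mul_of_nonneg_right hkey2 (by positivity)
      _ = (64 + 192 / Real.log 2) * ((nrm ℓ) ^ 2)⁻¹ * Real.log (nrm ℓ) := by ring
  calc (∑' k : ℤ × ℤ, ((1 + nrm k) ^ 2)⁻¹ * ((1 + nrm (ℓ - k)) ^ 2)⁻¹)
      ≤ 4 / (nrm ℓ) ^ 2 * (∑' k, g1 k) + 4 / (nrm ℓ) ^ 2 * (∑' k, g1 (ℓ - k))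
        + 1 / M * (∑' k, g3 k) + 1 / M * (∑' k, g3 (ℓ - k)) := by
        rw [← hsplit]; exact hstep
    _ ≤ 4 / (nrm ℓ) ^ 2 * (8 * (1 + Real.log (M + 1))) * 2 + 1 / M * (16 / M) * 2 := hcomb
    _ ≤ (64 + 192 / Real.log 2) * ((nrm ℓ) ^ 2)⁻¹ * Real.log (nrm ℓ) := harith
end

section
/- There exists a constant C > 0 such that for all ℓ ∈ ℤ² with ℓ₁ < 0 and |ℓ| ≥ 2, the sum ∑_{k ∈ U_Γ} (1+|k|)^{-1}·(1+|ℓ-k|)^{-2} ≤ C·|ℓ|^{-2}·log|ℓ|, where U_Γ = {k ∈ ℤ² : |k₂| ≤ r, k₁ ≥ 0} is a half-strip of fixed width r ≥ 1. -/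
/-!
For `ℓ₁ < 0 ≤ k₁` and `|k₂| ≤ r` the first coordinates of `ℓ` and `k` have opposite signs, so
`|ℓ| + |k| ≤ 2r (1 + |ℓ - k|)`. Hence the summand at `k = (n, j)` is at most
`(2r)² (1 + n)⁻¹ (L + n)⁻²` with `L = |ℓ|`, and summing over the `2r + 1` values of `j` leaves a
series in `n`. Partial fractions bound `(1 + n)⁻¹ (L + n)⁻²` by
`(L (L - 1))⁻¹ ((n + 1)⁻¹ - (n + L)⁻¹)`, which telescopes to at most the harmonic number
`H_⌊L⌋ ≤ 1 + log L`.
-/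

open Finset

lemma abs_fst_le_nrm (k : ℤ × ℤ) : |(k.1 : ℝ)| ≤ nrm k :=
  Real.abs_le_sqrt (le_add_of_nonneg_right (sq_nonneg _))

lemma abs_snd_le_nrm (k : ℤ × ℤ) : |(k.2 : ℝ)| ≤ nrm k :=
  Real.abs_le_sqrt (le_add_of_nonneg_left (sq_nonneg _))

lemma nrm_le_abs_add_abs (k : ℤ × ℤ) : nrm k ≤ |(k.1 : ℝ)| + |(k.2 : ℝ)| := by
  refine Real.sqrt_le_iff.mpr ⟨by positivity, ?_⟩
  nlinarith [sq_abs (k.1 : ℝ), sq_abs (k.2 : ℝ), abs_nonneg (k.1 : ℝ), abs_nonneg (k.2 : ℝ)]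

lemma nrm_add_nrm_le_of_mem_halfStrip {r : ℝ} (hr : 1 ≤ r) {ℓ k : ℤ × ℤ} (hℓ : ℓ.1 < 0)
    (hk₁ : 0 ≤ k.1) (hk₂ : |(k.2 : ℝ)| ≤ r) :
    nrm ℓ + nrm k ≤ 2 * r * (1 + nrm (ℓ - k)) := by
  have hℓ₁ : (ℓ.1 : ℝ) < 0 := by exact_mod_cast hℓ
  have hk₁' : (0 : ℝ) ≤ k.1 := by exact_mod_cast hk₁
  have hfst : -(ℓ.1 : ℝ) + k.1 ≤ nrm (ℓ - k) := by
    have := abs_fst_le_nrm (ℓ - k)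
    simp only [Prod.fst_sub, Int.cast_sub] at this
    rw [abs_of_neg (by linarith)] at this
    linarith
  have hsnd : |(ℓ.2 : ℝ)| ≤ nrm (ℓ - k) + r := by
    have := abs_snd_le_nrm (ℓ - k)
    simp only [Prod.snd_sub, Int.cast_sub] at this
    linarith [abs_sub_abs_le_abs_sub (ℓ.2 : ℝ) k.2]
  have hdist : 0 ≤ nrm (ℓ - k) := Real.sqrt_nonneg _
  have hℓ' := nrm_le_abs_add_abs ℓ
  have hk' := nrm_le_abs_add_abs k
  rw [abs_of_neg hℓ₁] at hℓ'
  rw [abs_of_nonneg hk₁'] at hk'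
  nlinarith [mul_nonneg (sub_nonneg.mpr hr) hdist]

lemma sum_range_sub_shift_le {α : Type*} [AddCommGroup α] [PartialOrder α] [IsOrderedAddMonoid α]
    {f : ℕ → α} (hf : ∀ n, 0 ≤ f n) (k m : ℕ) :
    ∑ n ∈ range m, (f n - f (k + n)) ≤ ∑ n ∈ range k, f n := by
  rw [sum_sub_distrib, sub_le_iff_le_add, ← sum_range_add]
  exact sum_le_sum_of_subset_of_nonneg (range_subset_range.mpr (Nat.le_add_left m k))
    fun n _ _ => hf n

/-- Partial fractions, with `L` replaced by the integer `⌊L⌋₊ + 1 > L` so that the bound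
telescopes along `ℕ`. -/
lemma inv_mul_inv_add_sq_le {L : ℝ} (hL : 1 < L) (n : ℕ) :
    (1 + n : ℝ)⁻¹ * ((L + n) ^ 2)⁻¹ ≤
      (L * (L - 1))⁻¹ * ((n + 1 : ℝ)⁻¹ - ((⌊L⌋₊ + n : ℕ) + 1 : ℝ)⁻¹) := by
  have hn : (0 : ℝ) ≤ n := n.cast_nonneg
  have hLn : 0 < L + n := by linarith
  have hsq : ((L + n) ^ 2)⁻¹ ≤ (L * (L + n))⁻¹ :=
    inv_anti₀ (by positivity) (by nlinarith)
  have hpartial :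
      (1 + n : ℝ)⁻¹ * (L * (L + n))⁻¹ = (L * (L - 1))⁻¹ * ((n + 1 : ℝ)⁻¹ - (L + n)⁻¹) := by
    have : L - 1 ≠ 0 := by linarith
    field_simp
    ring
  have hfloor : ((⌊L⌋₊ + n : ℕ) + 1 : ℝ)⁻¹ ≤ (L + n)⁻¹ := by
    push_cast
    exact inv_anti₀ hLn (by linarith [Nat.lt_floor_add_one L])
  calc (1 + n : ℝ)⁻¹ * ((L + n) ^ 2)⁻¹ ≤ (1 + n : ℝ)⁻¹ * (L * (L + n))⁻¹ :=
        mul_le_mul_of_nonneg_left hsq (by positivity)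
    _ = (L * (L - 1))⁻¹ * ((n + 1 : ℝ)⁻¹ - (L + n)⁻¹) := hpartial
    _ ≤ _ := mul_le_mul_of_nonneg_left (sub_le_sub_left hfloor _)
        (inv_nonneg.mpr (mul_pos (by linarith) (by linarith)).le)

lemma sum_range_inv_mul_inv_add_sq_le {L : ℝ} (hL : 2 ≤ L) (m : ℕ) :
    ∑ n ∈ range m, (1 + n : ℝ)⁻¹ * ((L + n) ^ 2)⁻¹ ≤ 6 * (L ^ 2)⁻¹ * Real.log L := by
  set k := ⌊L⌋₊
  have hpos : 0 < L * (L - 1) := by nlinarith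
  have hcoef : (L * (L - 1))⁻¹ ≤ 2 * (L ^ 2)⁻¹ :=
    calc (L * (L - 1))⁻¹ ≤ (L ^ 2 / 2)⁻¹ := inv_anti₀ (by positivity) (by nlinarith)
      _ = 2 * (L ^ 2)⁻¹ := by rw [inv_div, div_eq_mul_inv]
  have hharmonic : ∑ n ∈ range k, (n + 1 : ℝ)⁻¹ ≤ 1 + Real.log L := by
    simpa [harmonic] using harmonic_floor_le_one_add_log L (by linarith)
  have hlog : 1 + Real.log L ≤ 3 * Real.log L := by
    linarith [Real.log_le_log (by norm_num) hL, Real.log_two_gt_d9]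
  calc ∑ n ∈ range m, (1 + n : ℝ)⁻¹ * ((L + n) ^ 2)⁻¹
      ≤ ∑ n ∈ range m, (L * (L - 1))⁻¹ * ((n + 1 : ℝ)⁻¹ - ((k + n : ℕ) + 1 : ℝ)⁻¹) :=
        sum_le_sum fun n _ => inv_mul_inv_add_sq_le (by linarith) n
    _ = (L * (L - 1))⁻¹ * ∑ n ∈ range m, ((n + 1 : ℝ)⁻¹ - ((k + n : ℕ) + 1 : ℝ)⁻¹) := by
        rw [mul_sum]
    _ ≤ (L * (L - 1))⁻¹ * ∑ n ∈ range k, (n + 1 : ℝ)⁻¹ :=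
        mul_le_mul_of_nonneg_left
          (sum_range_sub_shift_le (f := fun n : ℕ => (n + 1 : ℝ)⁻¹) (fun _ => by positivity) k m)
          (inv_nonneg.mpr hpos.le)
    _ ≤ 2 * (L ^ 2)⁻¹ * (3 * Real.log L) :=
        mul_le_mul hcoef (hharmonic.trans hlog) (sum_nonneg fun _ _ => by positivity)
          (by positivity)
    _ = 6 * (L ^ 2)⁻¹ * Real.log L := by ring

lemma summand_le_of_mem_halfStrip {r : ℝ} (hr : 1 ≤ r) {ℓ k : ℤ × ℤ} (hℓ : ℓ.1 < 0)
    (hk₁ : 0 ≤ k.1) (hk₂ : |(k.2 : ℝ)| ≤ r) :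
    (1 + nrm k)⁻¹ * ((1 + nrm (ℓ - k)) ^ 2)⁻¹ ≤
      (2 * r) ^ 2 * ((1 + k.1 : ℝ)⁻¹ * ((nrm ℓ + k.1) ^ 2)⁻¹) := by
  have hk₁' : (0 : ℝ) ≤ k.1 := by exact_mod_cast hk₁
  have hfst : (k.1 : ℝ) ≤ nrm k := (le_abs_self _).trans (abs_fst_le_nrm k)
  have hℓpos : 0 < nrm ℓ :=
    (abs_pos.mpr (by exact_mod_cast hℓ.ne)).trans_le (abs_fst_le_nrm ℓ)
  have hdist : (nrm ℓ + k.1) / (2 * r) ≤ 1 + nrm (ℓ - k) := by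
    rw [div_le_iff₀ (by positivity)]
    linarith [nrm_add_nrm_le_of_mem_halfStrip hr hℓ hk₁ hk₂]
  calc (1 + nrm k)⁻¹ * ((1 + nrm (ℓ - k)) ^ 2)⁻¹
      ≤ (1 + k.1 : ℝ)⁻¹ * (((nrm ℓ + k.1) / (2 * r)) ^ 2)⁻¹ := by
        gcongr
    _ = (2 * r) ^ 2 * ((1 + k.1 : ℝ)⁻¹ * ((nrm ℓ + k.1) ^ 2)⁻¹) := by
        rw [div_pow, inv_div]
        ring

def halfStripEquiv (r : ℤ) : {k : ℤ × ℤ // |k.2| ≤ r ∧ 0 ≤ k.1} ≃ ℕ × Icc (-r) r where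
  toFun k := (k.1.1.toNat, ⟨k.1.2, mem_Icc.mpr (abs_le.mp k.2.1)⟩)
  invFun p := ⟨((p.1 : ℤ), p.2.1), abs_le.mpr (mem_Icc.mp p.2.2), Int.natCast_nonneg _⟩
  left_inv k := by
    obtain ⟨⟨k₁, k₂⟩, -, hk₁⟩ := k
    simp [Int.toNat_of_nonneg hk₁]
  right_inv p := by simp

lemma hasSum_comp_fst_of_nonneg {J : Type*} [Fintype J] {G : ℕ → ℝ} {a : ℝ} (hG : HasSum G a)
    (hG₀ : 0 ≤ G) : HasSum (fun p : ℕ × J => G p.1) (a * Fintype.card J) := by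
  have h1 : HasSum (fun _ : J => (1 : ℝ)) (Fintype.card J) := by
    simpa using hasSum_fintype (fun _ : J => (1 : ℝ))
  simpa using hG.mul h1 (hG.summable.mul_of_nonneg h1.summable hG₀ fun _ => zero_le_one)

/-- For a half-strip U_Γ = {k ∈ ℤ² : |k₂| ≤ r, k₁ ≥ 0} of fixed width r ≥ 1, there is
C > 0 such that for all ℓ ∈ ℤ² with ℓ₁ < 0 and |ℓ| ≥ 2,
∑_{k ∈ U_Γ} (1+|k|)⁻¹(1+|ℓ-k|)⁻² ≤ C·|ℓ|⁻²·log|ℓ|. -/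
theorem half_strip_sum_bound (r : ℤ) (hr : 1 ≤ r) :
    ∃ C : ℝ, 0 < C ∧ ∀ ℓ : ℤ × ℤ, ℓ.1 < 0 → 2 ≤ nrm ℓ →
      (∑' k : {k : ℤ × ℤ // |k.2| ≤ r ∧ 0 ≤ k.1},
          (1 + nrm k.1)⁻¹ * ((1 + nrm (ℓ - k.1)) ^ 2)⁻¹)
        ≤ C * ((nrm ℓ) ^ 2)⁻¹ * Real.log (nrm ℓ) := by
  have hr' : (1 : ℝ) ≤ r := by exact_mod_cast hr
  have hcard : 0 < Fintype.card (Icc (-r) r) := Fintype.card_pos_iff.mpr ⟨⟨0, by simp; omega⟩⟩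
  refine ⟨(2 * r) ^ 2 * Fintype.card (Icc (-r) r) * 6, by positivity, fun ℓ hℓ hL => ?_⟩
  set G : ℕ → ℝ := fun n => (1 + n : ℝ)⁻¹ * ((nrm ℓ + n) ^ 2)⁻¹
  have hG₀ : 0 ≤ G := fun n => by positivity
  have hGsum : Summable G := summable_of_sum_range_le hG₀ (sum_range_inv_mul_inv_add_sq_le hL)
  have hmaj := hasSum_comp_fst_of_nonneg (J := Icc (-r) r) hGsum.hasSum hG₀
  set F := fun k : {k : ℤ × ℤ // |k.2| ≤ r ∧ 0 ≤ k.1} =>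
    (1 + nrm k.1)⁻¹ * ((1 + nrm (ℓ - k.1)) ^ 2)⁻¹
  have hle (p : ℕ × Icc (-r) r) : F ((halfStripEquiv r).symm p) ≤ (2 * r) ^ 2 * G p.1 := by
    have := summand_le_of_mem_halfStrip hr' hℓ (k := ((p.1 : ℤ), p.2.1))
      (Int.natCast_nonneg _) (by exact_mod_cast abs_le.mpr (mem_Icc.mp p.2.2))
    push_cast at this
    exact this
  have hFsum : Summable fun p => F ((halfStripEquiv r).symm p) :=
    (hmaj.summable.mul_left _).of_nonneg_of_le (fun _ => by dsimp only [F, nrm]; positivity) hle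
  calc ∑' k, F k = ∑' p, F ((halfStripEquiv r).symm p) := ((halfStripEquiv r).symm.tsum_eq F).symm
    _ ≤ ∑' p : ℕ × Icc (-r) r, (2 * r) ^ 2 * G p.1 :=
        Summable.tsum_le_tsum hle hFsum (hmaj.summable.mul_left _)
    _ = (2 * r) ^ 2 * ((∑' n, G n) * Fintype.card (Icc (-r) r)) := by
        rw [tsum_mul_left, hmaj.tsum_eq]
    _ ≤ (2 * r) ^ 2 * ((6 * ((nrm ℓ) ^ 2)⁻¹ * Real.log (nrm ℓ)) * Fintype.card (Icc (-r) r)) := by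
        gcongr
        exact Real.tsum_le_of_sum_range_le hG₀ (sum_range_inv_mul_inv_add_sq_le hL)
    _ = _ := by ring
end

section
/- Let f : ℤ → ℝ satisfy |f(n)| ≤ C(1+|n|)^{-3} for all n ∈ ℤ and ∑_{n ∈ ℤ} f(n) = 0. Define g(n) := ∑_{m < n} f(m). Then g(n+1) - g(n) = f(n) for all n, and |g(n)| ≤ C'(1+|n|)^{-2} for a constant C' depending only on C. -/
set_option maxHeartbeats 1000000

open Finset

lemma key_ineq (x : ℝ) (hx : 1 ≤ x) :
    ((x + 1) ^ 3)⁻¹ ≤ (x ^ 2)⁻¹ - ((x + 1) ^ 2)⁻¹ := by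
  have hx0 : (0:ℝ) < x := by linarith
  have hx1 : (0:ℝ) < x + 1 := by linarith
  rw [inv_eq_one_div, inv_eq_one_div, inv_eq_one_div,
    div_sub_div _ _ (by positivity) (by positivity),
    div_le_div_iff₀ (by positivity) (by positivity)]
  nlinarith [sq_nonneg x, pow_pos hx1 3, pow_pos hx0 2]

lemma sum_bound (a : ℝ) (ha : 1 ≤ a) :
    Summable (fun k : ℕ => (((a + 1) + k) ^ 3)⁻¹) ∧
    ∑' k : ℕ, (((a + 1) + k) ^ 3)⁻¹ ≤ (a ^ 2)⁻¹ := by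
  have hterm : ∀ k : ℕ, (((a + 1) + k) ^ 3)⁻¹ ≤ ((a + k) ^ 2)⁻¹ - ((a + (k+1:ℕ)) ^ 2)⁻¹ := by
    intro k
    have h := key_ineq (a + k) (by have : (0:ℝ) ≤ k := Nat.cast_nonneg k; linarith)
    have e1 : ((a + 1) + (k:ℝ)) = (a + k) + 1 := by ring
    have e2 : (a + ((k:ℕ)+1:ℕ) : ℝ) = (a + k) + 1 := by push_cast; ring
    rw [e1, e2]; exact h
  have hpos : ∀ k : ℕ, 0 ≤ (((a + 1) + (k:ℝ)) ^ 3)⁻¹ := by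
    intro k
    have : (0:ℝ) ≤ k := Nat.cast_nonneg k
    positivity
  have hrange : ∀ N, ∑ k ∈ range N, (((a + 1) + (k:ℝ)) ^ 3)⁻¹ ≤ (a ^ 2)⁻¹ := by
    intro N
    have htel := Finset.sum_range_sub' (fun k : ℕ => ((a + k) ^ 2)⁻¹) N
    calc ∑ k ∈ range N, (((a + 1) + (k:ℝ)) ^ 3)⁻¹
        ≤ ∑ k ∈ range N, (((a + k) ^ 2)⁻¹ - ((a + (k+1:ℕ)) ^ 2)⁻¹) :=
          Finset.sum_le_sum fun k _ => hterm k
      _ = ((a + (0:ℕ)) ^ 2)⁻¹ - ((a + (N:ℕ)) ^ 2)⁻¹ := htel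
      _ ≤ (a ^ 2)⁻¹ := by
          have hN : (0:ℝ) ≤ (N:ℝ) := Nat.cast_nonneg N
          have : (0:ℝ) ≤ ((a + (N:ℝ)) ^ 2)⁻¹ := by positivity
          simp only [Nat.cast_zero, add_zero]
          linarith
  exact ⟨summable_of_sum_range_le hpos hrange, Real.tsum_le_of_sum_range_le hpos hrange⟩

lemma my_abs_tsum_le (g : ℕ → ℝ) (h : Summable fun k => |g k|) :
    |∑' k, g k| ≤ ∑' k, |g k| := by
  have h' : Summable fun k => ‖g k‖ := by simpa [Real.norm_eq_abs] using h
  simpa [Real.norm_eq_abs] using norm_tsum_le_tsum_norm h'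

/-- 1D discrete antiderivative: if f : ℤ → ℝ satisfies |f(n)| ≤ C(1+|n|)⁻³ and
∑ f = 0, then g(n) := ∑_{m < n} f(m) satisfies g(n+1) - g(n) = f(n) and
|g(n)| ≤ C'(1+|n|)⁻² with C' depending only on C. -/
theorem discrete_antiderivative (C : ℝ) (hC : 0 < C) :
    ∃ C' : ℝ, 0 < C' ∧
      ∀ f : ℤ → ℝ, (∀ n : ℤ, |f n| ≤ C * ((1 + |(n : ℝ)|) ^ 3)⁻¹) →
        Summable f → (∑' n : ℤ, f n) = 0 →
        (∀ n : ℤ, (∑' m : {m : ℤ // m < n + 1}, f m) - (∑' m : {m : ℤ // m < n}, f m) = f n) ∧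
        (∀ n : ℤ, |∑' m : {m : ℤ // m < n}, f m| ≤ C' * ((1 + |(n : ℝ)|) ^ 2)⁻¹) := by
  refine ⟨4 * C, by linarith, ?_⟩
  intro f hf hsum htot
  have habs : Summable (fun m : ℤ => |f m|) := hsum.abs
  constructor
  · -- difference part
    intro n
    have hset : {m : ℤ | m < n + 1} = {m : ℤ | m < n} ∪ {n} := by
      ext m; simp only [Set.mem_setOf_eq, Set.union_singleton, Set.mem_insert_iff]; omega
    have hdisj : Disjoint {m : ℤ | m < n} ({n} : Set ℤ) := by
      simp [Set.disjoint_singleton_right]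
    have h1 : (∑' m : {m : ℤ // m < n + 1}, f m)
        = (∑' m : ↥({m : ℤ | m < n} ∪ {n}), f m) := tsum_congr_set_coe f hset
    rw [h1, Summable.tsum_union_disjoint hdisj (hsum.subtype _) (hsum.subtype _), tsum_singleton]
    exact add_sub_cancel_left _ _
  · intro n
    rcases le_or_gt n 0 with hn | hn
    · -- n ≤ 0 : sum over m < n directly
      set a : ℝ := 1 + |(n : ℝ)| with ha_def
      have ha : 1 ≤ a := le_add_of_nonneg_right (abs_nonneg _)
      obtain ⟨hS, hB⟩ := sum_bound a ha
      have hrw : (∑' m : {m : ℤ // m < n}, f m) = ∑' k : ℕ, f (n - 1 - k) :=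
        (Equiv.tsum_eq
          (⟨fun k : ℕ => (⟨n - 1 - k, by omega⟩ : {m : ℤ // m < n}),
            fun m => (n - 1 - m.1).toNat,
            fun k => show (n - 1 - (n - 1 - (k:ℤ))).toNat = k by omega,
            fun m => Subtype.ext (show n - 1 - ((n - 1 - m.1).toNat : ℤ) = m.1 by
              have := m.2; omega)⟩ : ℕ ≃ {m : ℤ // m < n})
          (fun m : {m : ℤ // m < n} => f m)).symm
      rw [hrw]
      have hinj : Function.Injective (fun k : ℕ => n - 1 - (k:ℤ)) := by
        intro a b h; simpa using h
      have hsum1 : Summable (fun k : ℕ => |f (n - 1 - k)|) := habs.comp_injective hinj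
      have hbound : ∀ k : ℕ, |f (n - 1 - k)| ≤ C * (((a + 1) + k) ^ 3)⁻¹ := by
        intro k
        have h := hf (n - 1 - k)
        have : |((n - 1 - (k:ℤ) : ℤ) : ℝ)| = 1 + |(n:ℝ)| + k := by
          have hn' : ((n - 1 - (k:ℤ) : ℤ) : ℝ) = (n:ℝ) - 1 - k := by push_cast; ring
          rw [hn', abs_of_nonpos, abs_of_nonpos]
          · ring
          · exact_mod_cast (by exact_mod_cast hn : (n:ℝ) ≤ 0)
          · have : (n:ℝ) ≤ 0 := by exact_mod_cast hn
            have : (0:ℝ) ≤ k := Nat.cast_nonneg k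
            linarith
        rw [this] at h
        calc |f (n - 1 - k)| ≤ C * ((1 + (1 + |(n:ℝ)| + k)) ^ 3)⁻¹ := h
          _ = C * (((a + 1) + k) ^ 3)⁻¹ := by rw [ha_def]; ring_nf
      calc |∑' k : ℕ, f (n - 1 - k)| ≤ ∑' k : ℕ, |f (n - 1 - k)| :=
            my_abs_tsum_le _ hsum1
        _ ≤ ∑' k : ℕ, C * (((a + 1) + k) ^ 3)⁻¹ :=
            Summable.tsum_le_tsum hbound hsum1 (hS.mul_left C)
        _ = C * ∑' k : ℕ, (((a + 1) + k) ^ 3)⁻¹ := tsum_mul_left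
        _ ≤ C * (a ^ 2)⁻¹ := by
            exact mul_le_mul_of_nonneg_left hB hC.le
        _ ≤ 4 * C * ((1 + |(n:ℝ)|) ^ 2)⁻¹ := by
            rw [← ha_def]
            have h2 : (0:ℝ) < (a^2)⁻¹ := by positivity
            nlinarith
    · -- n ≥ 1 : use complement
      set a : ℝ := (n : ℝ) with ha_def
      have ha : 1 ≤ a := by
        have h1 : (1:ℤ) ≤ n := hn
        rw [ha_def]; exact_mod_cast h1
      obtain ⟨hS, hB⟩ := sum_bound a ha
      have hcompl : (∑' m : {m : ℤ // m < n}, f m)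
          = - ∑' m : ↥({m : ℤ | m < n}ᶜ), f m := by
        have h0 := Summable.tsum_subtype_add_tsum_subtype_compl hsum {m : ℤ | m < n}
        rw [htot] at h0
        have hid : (∑' m : {m : ℤ // m < n}, f m)
            = ∑' x : ↥{m : ℤ | m < n}, f x := rfl
        rw [hid]; linarith
      rw [hcompl, abs_neg]
      have hrw : (∑' m : ↥({m : ℤ | m < n}ᶜ), f m) = ∑' k : ℕ, f (n + k) :=
        (Equiv.tsum_eq
          (⟨fun k : ℕ => (⟨n + k, by simp⟩ : ↥({m : ℤ | m < n}ᶜ)),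
            fun m => (m.1 - n).toNat,
            fun k => show ((n + (k:ℤ)) - n).toNat = k by omega,
            fun m => Subtype.ext (show n + (((m.1 - n).toNat : ℤ)) = m.1 by
              have := m.2
              simp only [Set.mem_compl_iff, Set.mem_setOf_eq, not_lt] at this
              omega)⟩ : ℕ ≃ ↥({m : ℤ | m < n}ᶜ))
          (fun m : ↥({m : ℤ | m < n}ᶜ) => f m)).symm
      rw [hrw]
      have hinj : Function.Injective (fun k : ℕ => n + (k:ℤ)) := by
        intro a b h; simpa using h
      have hsum1 : Summable (fun k : ℕ => |f (n + k)|) := habs.comp_injective hinj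
      have hbound : ∀ k : ℕ, |f (n + k)| ≤ C * (((a + 1) + k) ^ 3)⁻¹ := by
        intro k
        have h := hf (n + k)
        have : |((n + (k:ℤ) : ℤ) : ℝ)| = (n:ℝ) + k := by
          rw [abs_of_pos]
          · push_cast; ring
          · push_cast
            have : (1:ℝ) ≤ (n:ℝ) := by exact_mod_cast hn
            have : (0:ℝ) ≤ k := Nat.cast_nonneg k
            push_cast; linarith
        rw [this] at h
        calc |f (n + k)| ≤ C * ((1 + ((n:ℝ) + k)) ^ 3)⁻¹ := h
          _ = C * (((a + 1) + k) ^ 3)⁻¹ := by rw [ha_def]; ring_nf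
      calc |∑' k : ℕ, f (n + k)| ≤ ∑' k : ℕ, |f (n + k)| :=
            my_abs_tsum_le _ hsum1
        _ ≤ ∑' k : ℕ, C * (((a + 1) + k) ^ 3)⁻¹ :=
            Summable.tsum_le_tsum hbound hsum1 (hS.mul_left C)
        _ = C * ∑' k : ℕ, (((a + 1) + k) ^ 3)⁻¹ := tsum_mul_left
        _ ≤ C * (a ^ 2)⁻¹ := mul_le_mul_of_nonneg_left hB hC.le
        _ ≤ 4 * C * ((1 + |(n:ℝ)|) ^ 2)⁻¹ := by
            have hn1 : (1:ℝ) ≤ (n:ℝ) := by exact_mod_cast hn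
            have habs' : |(n:ℝ)| = (n:ℝ) := abs_of_pos (by linarith)
            rw [habs', ← ha_def]
            have key : (a ^ 2)⁻¹ ≤ 4 * ((1 + a) ^ 2)⁻¹ := by
              rw [inv_eq_one_div, inv_eq_one_div, mul_one_div,
                div_le_div_iff₀ (by positivity) (by positivity)]
              nlinarith
            calc C * (a ^ 2)⁻¹ ≤ C * (4 * ((1 + a) ^ 2)⁻¹) :=
                  mul_le_mul_of_nonneg_left key hC.le
              _ = 4 * C * ((1 + a) ^ 2)⁻¹ := by ring
end

section
/- Let H be a real Hilbert space, E : U → ℝ a C² functional on an open set U ⊆ H, and ū ∈ U with ⟨δE(ū), v⟩ = 0 for all v. Suppose ⟨δ²E(ū)v, v⟩ ≥ γ‖v‖² for all v ∈ H with γ > 0, and δ²E is Lipschitz near ū. Let (V_n) be a family of closed subspaces and Π_n ū ∈ V_n with ε_n := ‖ū - Π_n ū‖ → 0. Then for all n large enough there exists u_n with u_n - Π_n ū ∈ V_n, ⟨δE(u_n), v⟩ = 0 for all v ∈ V_n, and ‖u_n - ū‖ ≤ C·ε_n. -/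
open RealInnerProductSpace
set_option maxHeartbeats 1000000

private lemma galerkin_core
    {H : Type*} [NormedAddCommGroup H] [InnerProductSpace ℝ H] [CompleteSpace H]
    (U : Set H) (hU : IsOpen U) (E : H → ℝ) (ubar : H)
    (hE : ContDiffOn ℝ 2 E U)
    (hcrit : fderiv ℝ E ubar = 0)
    (γ : ℝ) (hγ : 0 < γ)
    (hcoerc : ∀ v : H, γ * ‖v‖ ^ 2 ≤ fderiv ℝ (fderiv ℝ E) ubar v v)
    (L ρ : ℝ) (hL0 : 0 ≤ L) (hρ : 0 < ρ) (hballU : Metric.ball ubar ρ ⊆ U)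
    (hLipρ : ∀ x ∈ Metric.ball ubar ρ,
      ‖fderiv ℝ (fderiv ℝ E) x - fderiv ℝ (fderiv ℝ E) ubar‖ ≤ L * ρ)
    (hLρ : L * ρ ≤ γ / 2)
    (V : Submodule ℝ H) (hVc : IsClosed (V : Set H)) (p : H) (hp : p ∈ V)
    (hsmall : ‖ubar - p‖ * (γ + 2 * (L * ρ + ‖fderiv ℝ (fderiv ℝ E) ubar‖)) ≤ ρ * γ / 2) :
    ∃ u : H, u - p ∈ V ∧ (∀ v ∈ V, fderiv ℝ E u v = 0) ∧
      ‖u - ubar‖ ≤ (γ + 2 * (L * ρ + ‖fderiv ℝ (fderiv ℝ E) ubar‖)) / γ * ‖ubar - p‖ := by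
  haveI : CompleteSpace V := hVc.completeSpace_coe
  set B := fderiv ℝ (fderiv ℝ E) ubar with hBdef
  set ε := ‖ubar - p‖ with hεdef
  have hε0 : 0 ≤ ε := norm_nonneg _
  set M := L * ρ + ‖B‖ with hMdef
  have hM0 : 0 ≤ M := by positivity
  -- mean value estimate
  have hf' : ∀ z ∈ Metric.ball ubar ρ,
      HasFDerivAt (fderiv ℝ E) (fderiv ℝ (fderiv ℝ E) z) z := by
    intro z hz
    have h1 : ContDiffOn ℝ 1 (fderiv ℝ E) U := hE.fderiv_of_isOpen hU (by norm_num)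
    exact ((h1.differentiableOn one_ne_zero).differentiableAt
      (hU.mem_nhds (hballU hz))).hasFDerivAt
  have hMVT : ∀ x ∈ Metric.ball ubar ρ, ∀ y ∈ Metric.ball ubar ρ,
      ‖fderiv ℝ E y - fderiv ℝ E x - B (y - x)‖ ≤ L * ρ * ‖y - x‖ := by
    intro x hx y hy
    exact (convex_ball ubar ρ).norm_image_sub_le_of_norm_hasFDerivWithin_le'
      (fun z hz => (hf' z hz).hasFDerivWithinAt) (fun z hz => hLipρ z hz) hx hy
  -- gradient
  set grad : H → H := fun x => (InnerProductSpace.toDual ℝ H).symm (fderiv ℝ E x) with hgraddef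
  have hgrad : ∀ (x : H) (v : H), ⟪grad x, v⟫ = fderiv ℝ E x v := fun x v =>
    InnerProductSpace.toDual_symm_apply
  set Q : H →L[ℝ] V := V.orthogonalProjectionOnto with hQdef
  have hQ : ∀ (x : H) (v : V), ⟪((Q x : V) : H), (v : H)⟫ = ⟪x, (v : H)⟫ := by
    intro x v
    have h : ⟪x - ((Q x : V) : H), (v : H)⟫ = 0 :=
      Submodule.starProjection_inner_eq_zero (K := V) x (v : H) v.2
    rw [inner_sub_left] at h
    linarith
  -- Lax-Milgram operator on V
  have hbc : IsCoercive (B.bilinearComp V.subtypeL V.subtypeL) := by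
    refine ⟨γ, hγ, fun v => ?_⟩
    have h := hcoerc (v : H)
    have heq : (B.bilinearComp V.subtypeL V.subtypeL) v v = B (v : H) (v : H) := rfl
    have hn : ‖v‖ = ‖(v : H)‖ := rfl
    rw [heq, hn]
    nlinarith [h]
  set e := hbc.continuousLinearEquivOfBilin with hedef
  have he : ∀ (v w : V), ⟪((e v : V) : H), (w : H)⟫ = B (v : H) (w : H) := by
    intro v w
    have h := hbc.continuousLinearEquivOfBilin_apply v w
    simpa [Submodule.coe_inner, ContinuousLinearMap.bilinearComp_apply] using h
  have hesymm : ∀ x : V, ‖e.symm x‖ ≤ γ⁻¹ * ‖x‖ := by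
    intro x
    set v := e.symm x with hv
    have h1 : γ * ‖v‖ * ‖v‖ ≤ ⟪((e v : V) : H), (v : H)⟫ := by
      have h2 := he v v
      have h3 := hcoerc (v : H)
      have hn : ‖(v : H)‖ = ‖v‖ := rfl
      rw [hn] at h3
      nlinarith [h2, h3]
    rw [show e v = x by rw [hv]; exact e.apply_symm_apply x] at h1
    have h4 : ⟪(x : H), (v : H)⟫ ≤ ‖x‖ * ‖v‖ := real_inner_le_norm (x : H) (v : H)
    rcases eq_or_lt_of_le (norm_nonneg v) with h5 | h5
    · rw [← h5]; positivity
    · have h6 : γ * ‖v‖ ≤ ‖x‖ := by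
        have h7 : γ * ‖v‖ * ‖v‖ ≤ ‖x‖ * ‖v‖ := le_trans h1 h4
        exact le_of_mul_le_mul_right h7 h5
      rw [inv_mul_eq_div, le_div_iff₀ hγ]
      linarith [h6]
  set r := 2 * M * ε / γ with hrdef
  have hr0 : 0 ≤ r := by positivity
  have hεr : ε + r ≤ ρ / 2 := by
    have h1 : r * γ = 2 * M * ε := by
      rw [hrdef]; field_simp
    nlinarith [hsmall, hγ, hε0, hM0]
  set T : V → V := fun w => w - e.symm (Q (grad (p + (w : H)))) with hTdef
  have hmem : ∀ w : V, ‖w‖ ≤ r → p + (w : H) ∈ Metric.ball ubar ρ := by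
    intro w hw
    rw [Metric.mem_ball, dist_eq_norm]
    have h1 : p + (w : H) - ubar = (w : H) - (ubar - p) := by abel
    have h2 : ‖(w : H) - (ubar - p)‖ ≤ ‖(w : H)‖ + ‖ubar - p‖ := norm_sub_le _ _
    have h3 : ‖(w : H)‖ = ‖w‖ := rfl
    rw [h3, ← hεdef] at h2
    rw [h1]
    linarith [hεr, hρ, hw, h2]
  -- key contraction estimate
  have hkey : ∀ w₁ w₂ : V, ‖w₁‖ ≤ r → ‖w₂‖ ≤ r →
      ‖T w₁ - T w₂‖ ≤ γ⁻¹ * (L * ρ) * ‖w₁ - w₂‖ := by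
    intro w₁ w₂ h1 h2
    have hx1 := hmem w₁ h1
    have hx2 := hmem w₂ h2
    set z : V := e (w₁ - w₂) - (Q (grad (p + (w₁ : H))) - Q (grad (p + (w₂ : H)))) with hzdef
    have hTz : T w₁ - T w₂ = e.symm z := by
      simp only [hTdef, hzdef, map_sub, ContinuousLinearEquiv.symm_apply_apply]
      abel
    have hznorm : ‖z‖ ≤ L * ρ * ‖w₁ - w₂‖ := by
      have hcz : ((w₁ - w₂ : V) : H) = (p + (w₁ : H)) - (p + (w₂ : H)) := by
        push_cast; abel
      have hzz : ⟪(z : H), (z : H)⟫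
          = -((fderiv ℝ E (p + (w₁ : H)) - fderiv ℝ E (p + (w₂ : H))
              - B ((p + (w₁ : H)) - (p + (w₂ : H)))) (z : H)) := by
        have hzin : (⟪(z : H), (z : H)⟫ : ℝ) = ⟪((e (w₁-w₂) : V) : H), (z : H)⟫
            - (⟪((Q (grad (p + (w₁ : H))) : V) : H), (z : H)⟫
              - ⟪((Q (grad (p + (w₂ : H))) : V) : H), (z : H)⟫) := by
          rw [hzdef]
          push_cast
          rw [inner_sub_left, inner_sub_left]
        rw [hzin, he, hQ, hQ, hgrad, hgrad, ← hcz]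
        simp only [ContinuousLinearMap.sub_apply]
        ring
      have hbound := hMVT (p + (w₂ : H)) hx2 (p + (w₁ : H)) hx1
      have habs : ⟪(z : H), (z : H)⟫ ≤ L * ρ * ‖w₁ - w₂‖ * ‖z‖ := by
        rw [hzz]
        calc -((fderiv ℝ E (p + (w₁ : H)) - fderiv ℝ E (p + (w₂ : H))
              - B ((p + (w₁ : H)) - (p + (w₂ : H)))) (z : H))
            ≤ ‖(fderiv ℝ E (p + (w₁ : H)) - fderiv ℝ E (p + (w₂ : H))
              - B ((p + (w₁ : H)) - (p + (w₂ : H)))) (z : H)‖ := by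
              rw [Real.norm_eq_abs]
              exact neg_le_abs _
          _ ≤ ‖fderiv ℝ E (p + (w₁ : H)) - fderiv ℝ E (p + (w₂ : H))
              - B ((p + (w₁ : H)) - (p + (w₂ : H)))‖ * ‖(z : H)‖ :=
              ContinuousLinearMap.le_opNorm _ _
          _ ≤ L * ρ * ‖(p + (w₁ : H)) - (p + (w₂ : H))‖ * ‖(z : H)‖ := by
              apply mul_le_mul_of_nonneg_right hbound (norm_nonneg _)
          _ = L * ρ * ‖w₁ - w₂‖ * ‖z‖ := by rw [← hcz]; rfl
      have hzz2 : ⟪(z : H), (z : H)⟫ = ‖z‖ * ‖z‖ := by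
        rw [show ‖z‖ = ‖(z : H)‖ from rfl]
        exact real_inner_self_eq_norm_mul_norm (z : H)
      rcases eq_or_lt_of_le (norm_nonneg z) with h5 | h5
      · rw [← h5]; positivity
      · rw [hzz2] at habs
        exact le_of_mul_le_mul_right habs h5
    rw [hTz]
    calc ‖e.symm z‖ ≤ γ⁻¹ * ‖z‖ := hesymm z
      _ ≤ γ⁻¹ * (L * ρ * ‖w₁ - w₂‖) := by
          apply mul_le_mul_of_nonneg_left hznorm (inv_pos.mpr hγ).le
      _ = γ⁻¹ * (L * ρ) * ‖w₁ - w₂‖ := by ring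
  -- residual estimate
  have hpmem : p ∈ Metric.ball ubar ρ := by
    have := hmem 0 (by simpa using hr0)
    simpa using this
  have hubarmem : ubar ∈ Metric.ball ubar ρ := Metric.mem_ball_self hρ
  have hres : ‖Q (grad p)‖ ≤ M * ε := by
    suffices hgen : ∀ z₀ : V, (∀ v : V, ⟪(z₀ : H), (v : H)⟫ = ⟪grad p, (v : H)⟫) →
        ‖z₀‖ ≤ (L * ρ + ‖B‖) * ε by
      exact hgen (Q (grad p)) (fun v => hQ (grad p) v)
    intro z₀ hz₀
    have hzz : ⟪(z₀ : H), (z₀ : H)⟫ = fderiv ℝ E p (z₀ : H) := by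
      rw [hz₀ z₀, hgrad]
    have hεeq : ‖p - ubar‖ = ε := by rw [hεdef, norm_sub_rev]
    have hbound := hMVT ubar hubarmem p hpmem
    have habs : ⟪(z₀ : H), (z₀ : H)⟫ ≤ (L * ρ + ‖B‖) * ε * ‖z₀‖ := by
      rw [hzz]
      have h1 : fderiv ℝ E p (z₀ : H)
          = (fderiv ℝ E p - fderiv ℝ E ubar - B (p - ubar)) (z₀ : H)
            + B (p - ubar) (z₀ : H) := by
        rw [hcrit]
        simp [ContinuousLinearMap.sub_apply]
      rw [h1]
      have hzineq : ‖(z₀ : H)‖ = ‖z₀‖ := rfl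
      have h2 : (fderiv ℝ E p - fderiv ℝ E ubar - B (p - ubar)) (z₀ : H)
          ≤ L * ρ * ε * ‖z₀‖ := by
        calc (fderiv ℝ E p - fderiv ℝ E ubar - B (p - ubar)) (z₀ : H)
            ≤ ‖(fderiv ℝ E p - fderiv ℝ E ubar - B (p - ubar)) (z₀ : H)‖ := by
              rw [Real.norm_eq_abs]; exact le_abs_self _
          _ ≤ ‖fderiv ℝ E p - fderiv ℝ E ubar - B (p - ubar)‖ * ‖(z₀ : H)‖ :=
              ContinuousLinearMap.le_opNorm _ _
          _ ≤ L * ρ * ‖p - ubar‖ * ‖(z₀ : H)‖ :=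
              mul_le_mul_of_nonneg_right hbound (norm_nonneg _)
          _ = L * ρ * ε * ‖z₀‖ := by rw [hεeq, hzineq]
      have h3 : B (p - ubar) (z₀ : H) ≤ ‖B‖ * ε * ‖z₀‖ := by
        calc B (p - ubar) (z₀ : H) ≤ ‖B (p - ubar) (z₀ : H)‖ := by
              rw [Real.norm_eq_abs]; exact le_abs_self _
          _ ≤ ‖B (p - ubar)‖ * ‖(z₀ : H)‖ := ContinuousLinearMap.le_opNorm _ _
          _ ≤ ‖B‖ * ‖p - ubar‖ * ‖(z₀ : H)‖ :=
              mul_le_mul_of_nonneg_right (B.le_opNorm _) (norm_nonneg _)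
          _ = ‖B‖ * ε * ‖z₀‖ := by rw [hεeq, hzineq]
      have hsplit : (L * ρ + ‖B‖) * ε * ‖z₀‖ = L * ρ * ε * ‖z₀‖ + ‖B‖ * ε * ‖z₀‖ := by ring
      rw [hsplit]
      exact add_le_add h2 h3
    have hzz2 : ⟪(z₀ : H), (z₀ : H)⟫ = ‖z₀‖ * ‖z₀‖ :=
      real_inner_self_eq_norm_mul_norm (z₀ : H)
    rcases eq_or_lt_of_le (norm_nonneg z₀) with h5 | h5
    · rw [← h5]; positivity
    · rw [hzz2] at habs
      exact le_of_mul_le_mul_right habs h5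
  have hT0 : ‖T 0‖ ≤ γ⁻¹ * (M * ε) := by
    have h1 : T 0 = -(e.symm (Q (grad p))) := by
      rw [hTdef]; simp
    rw [h1, norm_neg]
    calc ‖e.symm (Q (grad p))‖ ≤ γ⁻¹ * ‖Q (grad p)‖ := hesymm _
      _ ≤ γ⁻¹ * (M * ε) := mul_le_mul_of_nonneg_left hres (inv_pos.mpr hγ).le
  have hMer : γ⁻¹ * (M * ε) = r / 2 := by
    rw [hrdef]; field_simp
  have hhalf : γ⁻¹ * (L * ρ) ≤ 1 / 2 := by
    rw [inv_mul_le_iff₀ hγ]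
    linarith
  have hinv : ∀ w : V, ‖w‖ ≤ r → ‖T w‖ ≤ r := by
    intro w hw
    have h1 := hkey w 0 hw (by simpa using hr0)
    rw [sub_zero] at h1
    have h2 : ‖T w‖ ≤ ‖T w - T 0‖ + ‖T 0‖ := by
      have := norm_add_le (T w - T 0) (T 0)
      simpa using this
    have h3 : γ⁻¹ * (L * ρ) * ‖w‖ ≤ (1/2) * r := by
      apply mul_le_mul hhalf hw (norm_nonneg _) (by norm_num)
    linarith [hT0, hMer ▸ hT0]
  -- fixed point
  set S : Set V := Metric.closedBall 0 r with hSdef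
  haveI : CompleteSpace S := Metric.isClosed_closedBall.completeSpace_coe
  have hS0 : (0 : V) ∈ S := mem_closedBall_zero_iff.mpr (by simpa using hr0)
  haveI : Nonempty S := ⟨⟨0, hS0⟩⟩
  have hmemS : ∀ a : S, ‖(a : V)‖ ≤ r := fun a => mem_closedBall_zero_iff.mp a.2
  set T' : S → S := fun w => ⟨T w.1,
    mem_closedBall_zero_iff.mpr (hinv w.1 (hmemS w))⟩ with hT'def
  have hcontr : ContractingWith (1/2 : NNReal) T' := by
    constructor
    · rw [← NNReal.coe_lt_coe]
      norm_num
    · apply LipschitzWith.of_dist_le_mul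
      intro a b
      have h1 := hkey a.1 b.1 (hmemS a) (hmemS b)
      have h2 : γ⁻¹ * (L * ρ) * ‖a.1 - b.1‖ ≤ (1/2) * ‖a.1 - b.1‖ :=
        mul_le_mul_of_nonneg_right hhalf (norm_nonneg _)
      have h4 : dist (T' a) (T' b) = ‖T a.1 - T b.1‖ := by
        rw [Subtype.dist_eq, dist_eq_norm]
      have h5 : dist a b = ‖a.1 - b.1‖ := by
        rw [Subtype.dist_eq, dist_eq_norm]
      rw [h4, h5]
      calc ‖T a.1 - T b.1‖ ≤ γ⁻¹ * (L * ρ) * ‖a.1 - b.1‖ := h1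
        _ ≤ (1/2) * ‖a.1 - b.1‖ := h2
        _ = ((1/2 : NNReal) : ℝ) * ‖a.1 - b.1‖ := by norm_num
  set wstar := ContractingWith.fixedPoint T' hcontr with hwdef
  have hfix : T wstar.1 = wstar.1 :=
    congrArg Subtype.val (hcontr.fixedPoint_isFixedPt)
  have hQzero : Q (grad (p + (wstar.1 : H))) = 0 := by
    have h1 : e.symm (Q (grad (p + (wstar.1 : H)))) = 0 := by
      have := hfix
      rw [hTdef] at this
      simp only at this
      rw [sub_eq_self] at this
      exact this
    have h2 : e.symm (0 : V) = 0 := map_zero _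
    exact e.symm.injective (h1.trans h2.symm)
  refine ⟨p + (wstar.1 : H), ?_, ?_, ?_⟩
  · have : p + (wstar.1 : H) - p = (wstar.1 : H) := by abel
    rw [this]
    exact wstar.1.2
  · intro v hv
    have h1 := hQ (grad (p + (wstar.1 : H))) ⟨v, hv⟩
    rw [hQzero] at h1
    simp only [Submodule.coe_zero, inner_zero_left] at h1
    rw [← hgrad]
    exact h1.symm
  · have h1 : p + (wstar.1 : H) - ubar = -(ubar - p) + (wstar.1 : H) := by abel
    have h2 : ‖wstar.1‖ ≤ r := hmemS wstar
    calc ‖p + (wstar.1 : H) - ubar‖ = ‖-(ubar - p) + (wstar.1 : H)‖ := by rw [h1]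
      _ ≤ ‖ubar - p‖ + ‖wstar.1‖ := by
          refine le_trans (norm_add_le _ _) ?_
          rw [norm_neg]
          exact le_rfl
      _ ≤ ε + r := add_le_add le_rfl h2
      _ = (γ + 2 * M) / γ * ε := by rw [hrdef]; field_simp
      _ = (γ + 2 * (L * ρ + ‖B‖)) / γ * ‖ubar - p‖ := by rw [hMdef, hεdef]



/-- Abstract quasi-best-approximation via the inverse function theorem: if ubar is a
critical point of a C² functional E with coercive Hessian and locally Lipschitz second
derivative, and P_n ubar ∈ V_n approximate ubar with error ε_n → 0, then for large n there
exist Galerkin solutions u_n with u_n - P_n ubar ∈ V_n and ‖u_n - ubar‖ ≤ C ε_n. -/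
theorem galerkin_quasi_best_approximation
    {H : Type*} [NormedAddCommGroup H] [InnerProductSpace ℝ H] [CompleteSpace H]
    (U : Set H) (hU : IsOpen U) (E : H → ℝ) (ubar : H) (hubarU : ubar ∈ U)
    (hE : ContDiffOn ℝ 2 E U)
    (hcrit : fderiv ℝ E ubar = 0)
    (γ : ℝ) (hγ : 0 < γ)
    (hcoerc : ∀ v : H, γ * ‖v‖ ^ 2 ≤ fderiv ℝ (fderiv ℝ E) ubar v v)
    (hLip : ∃ δ > (0 : ℝ), ∃ L : ℝ, ∀ x ∈ Metric.ball ubar δ, ∀ y ∈ Metric.ball ubar δ,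
      ‖fderiv ℝ (fderiv ℝ E) x - fderiv ℝ (fderiv ℝ E) y‖ ≤ L * ‖x - y‖)
    (V : ℕ → Submodule ℝ H) (hVclosed : ∀ n, IsClosed (V n : Set H))
    (P : ℕ → H) (hP : ∀ n, P n ∈ V n)
    (hε : Filter.Tendsto (fun n => ‖ubar - P n‖) Filter.atTop (nhds 0)) :
    ∃ C : ℝ, 0 < C ∧ ∃ N : ℕ, ∀ n ≥ N, ∃ u : H,
      u - P n ∈ V n ∧ (∀ v ∈ V n, fderiv ℝ E u v = 0) ∧ ‖u - ubar‖ ≤ C * ‖ubar - P n‖ := by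
  obtain ⟨δ, hδ, L₀, hLip₀⟩ := hLip
  set L := max L₀ 0 with hLdef
  have hL0 : 0 ≤ L := le_max_right _ _
  have hLip' : ∀ x ∈ Metric.ball ubar δ,
      ‖fderiv ℝ (fderiv ℝ E) x - fderiv ℝ (fderiv ℝ E) ubar‖ ≤ L * ‖x - ubar‖ := by
    intro x hx
    refine (hLip₀ x hx ubar (Metric.mem_ball_self hδ)).trans ?_
    exact mul_le_mul_of_nonneg_right (le_max_left _ _) (norm_nonneg _)
  obtain ⟨δ₀, hδ₀, hball⟩ := Metric.isOpen_iff.mp hU ubar hubarU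
  set ρ := min δ₀ (min δ (γ / (2 * (L + 1)))) / 2 with hρdef
  have hρ : 0 < ρ := by
    rw [hρdef]
    have h1 : 0 < γ / (2 * (L + 1)) := by positivity
    have h2 : 0 < min δ₀ (min δ (γ / (2 * (L + 1)))) := lt_min hδ₀ (lt_min hδ h1)
    positivity
  have hρδ₀ : ρ < δ₀ := by
    rw [hρdef]
    have := min_le_left δ₀ (min δ (γ / (2 * (L + 1))))
    linarith [hρ, hρdef ▸ hρ]
  have hρδ : ρ ≤ δ := by
    rw [hρdef]
    have h1 := (min_le_right δ₀ (min δ (γ / (2 * (L + 1))))).trans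
      (min_le_left δ (γ / (2 * (L + 1))))
    linarith [hδ]
  have hρL : ρ ≤ γ / (2 * (L + 1)) := by
    rw [hρdef]
    have h1 := (min_le_right δ₀ (min δ (γ / (2 * (L + 1))))).trans
      (min_le_right δ (γ / (2 * (L + 1))))
    have h2 : 0 < γ / (2 * (L + 1)) := by positivity
    linarith
  have hLρ : L * ρ ≤ γ / 2 := by
    have h1 : L * ρ ≤ L * (γ / (2 * (L + 1)))  :=
      mul_le_mul_of_nonneg_left hρL hL0
    have h2 : L * (γ / (2 * (L + 1))) ≤ γ / 2 := by
      have h3 : (0:ℝ) < 2 * (L + 1) := by positivity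
      rw [← mul_div_assoc, div_le_div_iff₀ h3 (by norm_num : (0:ℝ) < 2)]
      nlinarith [hγ, hL0]
    linarith
  have hballU : Metric.ball ubar ρ ⊆ U :=
    fun x hx => hball (Metric.ball_subset_ball hρδ₀.le hx)
  have hLipρ : ∀ x ∈ Metric.ball ubar ρ,
      ‖fderiv ℝ (fderiv ℝ E) x - fderiv ℝ (fderiv ℝ E) ubar‖ ≤ L * ρ := by
    intro x hx
    have h1 : x ∈ Metric.ball ubar δ := Metric.ball_subset_ball hρδ hx
    refine (hLip' x h1).trans ?_
    have h2 : ‖x - ubar‖ ≤ ρ := by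
      rw [← dist_eq_norm]
      exact (Metric.mem_ball.mp hx).le
    exact mul_le_mul_of_nonneg_left h2 hL0
  set M := L * ρ + ‖fderiv ℝ (fderiv ℝ E) ubar‖ with hMdef
  have hM0 : 0 ≤ M := by positivity
  set C := (γ + 2 * M) / γ with hCdef
  have hC0 : 0 < C := by positivity
  set b := ρ * γ / (2 * (γ + 2 * M)) with hbdef
  have hb0 : 0 < b := by positivity
  have hev : ∀ᶠ n in Filter.atTop, ‖ubar - P n‖ < b := hε.eventually (gt_mem_nhds hb0)
  obtain ⟨N, hN⟩ := Filter.eventually_atTop.mp hev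
  refine ⟨C, hC0, N, fun n hn => ?_⟩
  have hsmall : ‖ubar - P n‖ * (γ + 2 * (L * ρ + ‖fderiv ℝ (fderiv ℝ E) ubar‖)) ≤ ρ * γ / 2 := by
    have h1 : ‖ubar - P n‖ < b := hN n hn
    have h2 : b * (γ + 2 * M) = ρ * γ / 2 := by
      rw [hbdef]
      field_simp
    rw [← hMdef, ← h2]
    have h3 : 0 < γ + 2 * M := by positivity
    exact mul_le_mul_of_nonneg_right h1.le h3.le |>.trans_eq rfl
  obtain ⟨u, hu1, hu2, hu3⟩ := galerkin_core U hU E ubar hE hcrit γ hγ hcoerc L ρ hL0 hρ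
    hballU hLipρ hLρ (V n) (hVclosed n) (P n) (hP n) hsmall
  exact ⟨u, hu1, hu2, by rw [hCdef, hMdef]; exact hu3⟩
end
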